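/- arXiv:2106.06006 — 2 statements merged into one kernel-verified Lean document; each statement's English description precedes it below -/
import Mathlib

section
/- In the free group F(b, β) of rank 2, for any n ≥ 1 the n+3 elements b², bβb⁻¹, β⁻ⁱbβⁱ for 1 ≤ i ≤ n, and β^{-(n+1)} b β^{(n+1)} form a basis of a free subgroup: the subgroup they generate is free of rank n+3 with these elements as free generators (equivalently, the homomorphism from a free group of rank n+3 sending the generators to these elements is injective). -/
/-!
Ping-pong in the action of `F(b, β)` on itself by left multiplication. For a reduced word `w`
let `cylinder w` be the set of elements whose reduced word begins with `w`. The letter `x` moves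
everything outside `cylinder [x⁻¹]` into `cylinder [x]`; conjugating by `p` and translating the
two cylinders by `p` preserves this, and `x²` does the same with the first cylinder
replaced by `x • cylinder [x]`. This gives each generator `β⁻ᵏbβᵏ`, `b²`, `bβb⁻¹` a pair of cylinders,
namely those of `β⁻ᵏb^{±1}`, of `bb` and `b⁻¹`, and of `bβ^{±1}`. These `2(n + 3)` words are
pairwise incomparable under the prefix order, so the cylinders are disjoint and the ping-pong
lemma applies.
-/

/-- The family of `n+3` elements of the free group `F(b, β) = FreeGroup (Fin 2)`
(with `b = FreeGroup.of 0` and `β = FreeGroup.of 1`): `b²`, `bβb⁻¹`,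
`β⁻ⁱbβⁱ` for `1 ≤ i ≤ n` (indexed by `Sum.inl i` with zero-based `i`, so with
exponent `i+1`), and `β^{-(n+1)} b β^{n+1}`. -/
def basisFamily (n : ℕ) : Fin n ⊕ Fin 3 → FreeGroup (Fin 2) :=
  let b : FreeGroup (Fin 2) := FreeGroup.of 0
  let be : FreeGroup (Fin 2) := FreeGroup.of 1
  fun j => match j with
  | Sum.inl i => be ^ (-((i : ℕ) + 1 : ℤ)) * b * be ^ ((i : ℕ) + 1)
  | Sum.inr t =>
      if t = 0 then b ^ 2
      else if t = 1 then b * be * b⁻¹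
      else be ^ (-((n : ℤ) + 1)) * b * be ^ (n + 1)

open Pointwise

section PingPong

variable {G α : Type*} [Group G] [MulAction G α]

def IsPingPongPair (g : G) (X Y : Set α) : Prop :=
  g • Yᶜ ⊆ X ∧ g⁻¹ • Xᶜ ⊆ Y

namespace IsPingPongPair

variable {g : G} {X Y : Set α}

theorem conj (h : IsPingPongPair g X Y) (p : G) :
    IsPingPongPair (p * g * p⁻¹) (p • X) (p • Y) := by
  constructor
  · rw [← Set.smul_set_compl, mul_smul, mul_smul, inv_smul_smul]
    exact Set.smul_set_mono h.1
  · rw [← Set.smul_set_compl, mul_inv_rev, mul_inv_rev, inv_inv, mul_smul, mul_smul,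
      inv_smul_smul]
    exact Set.smul_set_mono h.2

theorem sq (h : IsPingPongPair g X Y) : IsPingPongPair (g ^ 2) (g • X) Y := by
  constructor
  · rw [pow_two, mul_smul]
    exact Set.smul_set_mono h.1
  · rw [← Set.smul_set_compl, pow_two, mul_inv_rev, mul_smul, inv_smul_smul]
    exact h.2

end IsPingPongPair

end PingPong

namespace FreeGroup

variable {α : Type*} [DecidableEq α]

def cylinder (w : List (α × Bool)) : Set (FreeGroup α) := {g | w <+: g.toWord}

theorem mem_cylinder {w : List (α × Bool)} {g : FreeGroup α} :
    g ∈ cylinder w ↔ w <+: g.toWord := Iff.rfl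

theorem mk_mem_cylinder {w : List (α × Bool)} (hw : IsReduced w) : mk w ∈ cylinder w := by
  rw [mem_cylinder, toWord_mk, hw.reduce_eq]

theorem disjoint_cylinder {w v : List (α × Bool)} (hwv : ¬ w <+: v) (hvw : ¬ v <+: w) :
    Disjoint (cylinder w) (cylinder v) :=
  Set.disjoint_left.mpr fun _ hw hv =>
    (List.prefix_or_prefix_of_prefix hw hv).elim hwv hvw

theorem mk_smul_cylinder {w v : List (α × Bool)} (hwv : IsReduced (w ++ v)) (hv : v ≠ []) :
    mk w • cylinder v = cylinder (w ++ v) := by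
  ext g
  constructor
  · rintro ⟨h, ⟨r, hr⟩, rfl⟩
    have hred : IsReduced (w ++ v ++ r) :=
      hwv.append_overlap (hr ▸ isReduced_toWord) hv
    change mk w * h ∈ _
    rw [mem_cylinder, ← mk_toWord (x := h), ← hr, mul_mk, toWord_mk,
      ← List.append_assoc, hred.reduce_eq]
    exact List.prefix_append _ _
  · rintro ⟨r, hr⟩
    have hred : IsReduced (v ++ r) :=
      isReduced_toWord.infix ⟨w, [], by rw [← hr]; simp⟩
    refine ⟨mk (v ++ r), ?_, ?_⟩
    · rw [mem_cylinder, toWord_mk, hred.reduce_eq]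
      exact List.prefix_append _ _
    · change mk w * mk (v ++ r) = g
      rw [mul_mk, ← List.append_assoc, hr, mk_toWord]

theorem mk_singleton_smul_compl_cylinder_subset (x : α) (s : Bool) :
    mk [(x, s)] • (cylinder [(x, !s)])ᶜ ⊆ cylinder [(x, s)] := by
  rintro _ ⟨g, hg, rfl⟩
  have hred : IsReduced ((x, s) :: g.toWord) := by
    rcases hw : g.toWord with _ | ⟨⟨y, t⟩, r⟩
    · exact .singleton
    · refine isReduced_cons_cons.mpr ⟨?_, hw ▸ isReduced_toWord⟩
      rintro rfl
      have : t ≠ !s := fun ht => hg (by simp [mem_cylinder, hw, ht])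
      simpa [eq_comm] using this
  change mk [(x, s)] * g ∈ _
  rw [mem_cylinder, ← mk_toWord (x := g), mul_mk, toWord_mk, List.singleton_append,
    hred.reduce_eq]
  exact List.prefix_append [(x, s)] _

theorem of_smul_cylinder {x : α} {v : List (α × Bool)} (hv : IsReduced ((x, true) :: v))
    (hv' : v ≠ []) : of x • cylinder v = cylinder ((x, true) :: v) :=
  mk_smul_cylinder (w := [(x, true)]) hv hv'

omit [DecidableEq α] in
theorem inv_of_pow (x : α) (k : ℕ) : (of x ^ k)⁻¹ = mk (List.replicate k (x, false)) := by
  simp [of, pow_mk, inv_mk, invRev]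

theorem isPingPongPair_of (x : α) :
    IsPingPongPair (of x) (cylinder [(x, true)]) (cylinder [(x, false)]) :=
  ⟨mk_singleton_smul_compl_cylinder_subset x true, by
    simpa [of, inv_mk, invRev] using mk_singleton_smul_compl_cylinder_subset x false⟩

end FreeGroup

theorem List.replicate_append_singleton_prefix_iff {β : Type*} {a c c' : β} (hc : c ≠ a)
    {k k' : ℕ} :
    List.replicate k a ++ [c] <+: List.replicate k' a ++ [c'] ↔ k = k' ∧ c = c' := by
  induction k generalizing k' with
  | zero => cases k' <;> simp [List.replicate_succ, hc]
  | succ k ih => cases k' <;> simp [List.replicate_succ, ih]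

open FreeGroup

-- `β⁻ᵏ b` for `s = true` and `β⁻ᵏ b⁻¹` for `s = false`.
def conjWord (k : ℕ) (s : Bool) : List (Fin 2 × Bool) := List.replicate k (1, false) ++ [(0, s)]

theorem isReduced_conjWord (k : ℕ) (s : Bool) : IsReduced (conjWord k s) := by
  simp [FreeGroup.IsReduced, conjWord, List.isChain_append, List.isChain_replicate_of_rel,
    List.getLast?_replicate]

theorem isPingPongPair_conj_of_pow (k : ℕ) :
    IsPingPongPair (of (1 : Fin 2) ^ (-(k : ℤ)) * of 0 * of 1 ^ k)
      (cylinder (conjWord k true)) (cylinder (conjWord k false)) := by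
  have hsmul (s : Bool) :
      (of (1 : Fin 2) ^ k)⁻¹ • cylinder [(0, s)] = cylinder (conjWord k s) := by
    rw [inv_of_pow]
    exact mk_smul_cylinder (isReduced_conjWord k s) (List.cons_ne_nil _ _)
  simpa only [zpow_neg, zpow_natCast, inv_inv, hsmul] using
    (isPingPongPair_of (0 : Fin 2)).conj (of 1 ^ k)⁻¹

def pingPongWord (n : ℕ) (s : Bool) : Fin n ⊕ Fin 3 → List (Fin 2 × Bool)
  | .inl i => conjWord (i + 1) s
  | .inr t =>
      if t = 0 then cond s [(0, true), (0, true)] [(0, false)]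
      else if t = 1 then [(0, true), (1, s)]
      else conjWord (n + 1) s

theorem isReduced_pingPongWord (n : ℕ) (s : Bool) (j : Fin n ⊕ Fin 3) :
    IsReduced (pingPongWord n s j) := by
  rcases j with i | t
  · exact isReduced_conjWord _ _
  · fin_cases t <;> cases s <;> simp [pingPongWord, isReduced_conjWord]

theorem pingPongWord_not_prefix {n : ℕ} {s s' : Bool} {j j' : Fin n ⊕ Fin 3}
    (h : (s, j) ≠ (s', j')) : ¬ pingPongWord n s j <+: pingPongWord n s' j' := by
  have hc (s : Bool) : ((0 : Fin 2), s) ≠ (1, false) := by simp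
  rcases j with i | t <;> rcases j' with i' | t'
  · simp only [pingPongWord, conjWord, List.replicate_append_singleton_prefix_iff (hc _),
      Prod.mk.injEq, true_and]
    rintro ⟨hi, rfl⟩
    exact h (by rw [Fin.ext (Nat.succ_injective hi)])
  · fin_cases t'
    · cases s' <;> simp [pingPongWord, conjWord, List.replicate_succ]
    · simp [pingPongWord, conjWord, List.replicate_succ]
    · simp [pingPongWord, conjWord, List.replicate_append_singleton_prefix_iff (hc _)]
      omega
  · fin_cases t
    · cases s <;> simp [pingPongWord, conjWord, List.replicate_succ]
    · simp [pingPongWord, conjWord, List.replicate_succ]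
    · simp [pingPongWord, conjWord, List.replicate_append_singleton_prefix_iff (hc _)]
      omega
  · fin_cases t <;> fin_cases t' <;> cases s <;> cases s' <;>
      simp_all [pingPongWord, conjWord, List.replicate_succ]

theorem isPingPongPair_basisFamily (n : ℕ) (j : Fin n ⊕ Fin 3) :
    IsPingPongPair (basisFamily n j) (cylinder (pingPongWord n true j))
      (cylinder (pingPongWord n false j)) := by
  rcases j with i | t
  · simpa [basisFamily, pingPongWord] using isPingPongPair_conj_of_pow (i + 1)
  · fin_cases t
    · simpa [basisFamily, pingPongWord, of_smul_cylinder] using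
        (isPingPongPair_of (0 : Fin 2)).sq
    · simpa [basisFamily, pingPongWord, of_smul_cylinder] using
        (isPingPongPair_of (1 : Fin 2)).conj (of 0)
    · simpa [basisFamily, pingPongWord] using isPingPongPair_conj_of_pow (n + 1)

theorem disjoint_cylinder_pingPongWord {n : ℕ} {s s' : Bool} {j j' : Fin n ⊕ Fin 3}
    (h : (s, j) ≠ (s', j')) :
    Disjoint (cylinder (pingPongWord n s j)) (cylinder (pingPongWord n s' j')) :=
  disjoint_cylinder (pingPongWord_not_prefix h) (pingPongWord_not_prefix h.symm)

theorem basisFamily_injective_general (n : ℕ) :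
    Function.Injective (FreeGroup.lift (basisFamily n) :
      FreeGroup (Fin n ⊕ Fin 3) →* FreeGroup (Fin 2)) := by
  have : Nontrivial (Fin n ⊕ Fin 3) := ⟨⟨.inr 0, .inr 1, by simp⟩⟩
  exact FreeGroup.injective_lift_of_ping_pong (basisFamily n)
    (fun j => cylinder (pingPongWord n true j)) (fun j => cylinder (pingPongWord n false j))
    (fun j => ⟨_, mk_mem_cylinder (isReduced_pingPongWord n true j)⟩)
    (fun _ _ h => disjoint_cylinder_pingPongWord (by simpa using h))
    (fun _ _ h => disjoint_cylinder_pingPongWord (by simpa using h))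
    (fun _ _ => disjoint_cylinder_pingPongWord (by simp))
    (fun j => (isPingPongPair_basisFamily n j).1)
    (fun j => (isPingPongPair_basisFamily n j).2)

/-- In the free group `F(b, β)` of rank 2, for any `n ≥ 1` the
`n+3` elements `b²`, `bβb⁻¹`, `β⁻ⁱbβⁱ` for `1 ≤ i ≤ n`, and `β^{-(n+1)} b β^{n+1}`
form a basis of a free subgroup: the homomorphism from the free group of rank `n+3`
sending the generators to these elements is injective. -/
theorem basisFamily_injective (n : ℕ) (hn : 1 ≤ n) :
    Function.Injective (FreeGroup.lift (basisFamily n) :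
      FreeGroup (Fin n ⊕ Fin 3) →* FreeGroup (Fin 2)) :=
  basisFamily_injective_general n
end

section
/- Let k ≥ 1 and let a : Fin k → ℕ be a vector of nonnegative integers with gcd(a₁,…,a_k) = 1. Then a can be transformed into the vector (1,0,…,0) by a finite sequence of moves, where each move either (a) chooses indices r ≠ s with a_s ≤ a_r and replaces a_r by a_r − a_s while leaving all other entries unchanged, or (b) permutes the entries of the vector. -/
/-- Move (a): choose indices `r ≠ s` with `a s ≤ a r` and replace `a r` by
`a r - a s`, leaving all other entries unchanged. -/
def SubtractMove {k : ℕ} (a a' : Fin k → ℕ) : Prop :=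
  ∃ r s : Fin k, r ≠ s ∧ a s ≤ a r ∧ a' = Function.update a r (a r - a s)

/-- Move (b): permute the entries of the vector. -/
def PermMove {k : ℕ} (a a' : Fin k → ℕ) : Prop :=
  ∃ σ : Equiv.Perm (Fin k), a' = a ∘ σ

/-!
Euclid's algorithm on several numbers. A subtraction move preserves the gcd of the
entries and, when both entries involved are positive, strictly decreases their sum.
So as long as two entries are positive we can subtract the smaller from the larger;
when this is no longer possible only one entry is positive, and it equals the gcd,
namely `1`. A single permutation then moves it to the first position.
-/

open Finset Function Relation

section Vectors

variable {ι : Type*} [Fintype ι]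

theorem univ_gcd_eq_of_forall_ne_eq_zero (a : ι → ℕ) {i : ι} (h : ∀ j ≠ i, a j = 0) :
    univ.gcd a = a i := by
  refine Nat.dvd_left_iff_eq.1 fun d => ?_
  simp only [Finset.dvd_gcd_iff, mem_univ, true_imp_iff]
  refine ⟨fun hd => hd i, fun hd j => ?_⟩
  rcases eq_or_ne j i with rfl | hj
  · exact hd
  · simp [h j hj]

variable [DecidableEq ι]

theorem univ_gcd_update_sub (a : ι → ℕ) {r s : ι} (hrs : r ≠ s) (hle : a s ≤ a r) :
    univ.gcd (update a r (a r - a s)) = univ.gcd a := by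
  refine Nat.dvd_left_iff_eq.1 fun d => ?_
  simp only [Finset.dvd_gcd_iff, mem_univ, true_imp_iff]
  have hs : (∀ i, d ∣ update a r (a r - a s) i) → d ∣ a s := fun h => by
    simpa [update_of_ne hrs.symm] using h s
  refine ⟨fun h i => ?_, fun h i => ?_⟩
  · rcases eq_or_ne i r with rfl | hi
    · simpa [Nat.dvd_sub_iff_left hle (hs h)] using h i
    · simpa [update_of_ne hi] using h i
  · rcases eq_or_ne i r with rfl | hi
    · simpa using Nat.dvd_sub (h i) (h s)
    · simpa [update_of_ne hi] using h i

theorem sum_update_lt_sum {M : Type*} [AddCommMonoid M] [PartialOrder M]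
    [IsOrderedCancelAddMonoid M] (a : ι → M) {r : ι} {x : M} (hx : x < a r) :
    ∑ i, update a r x i < ∑ i, a i := by
  refine sum_lt_sum (fun i _ => ?_) ⟨r, mem_univ r, by simpa using hx⟩
  rcases eq_or_ne i r with rfl | hi
  · simpa using hx.le
  · simp [update_of_ne hi]

end Vectors

theorem subtractMove_update {k : ℕ} (a : Fin k → ℕ) {r s : Fin k} (hrs : r ≠ s)
    (hle : a s ≤ a r) : SubtractMove a (update a r (a r - a s)) :=
  ⟨r, s, hrs, hle, rfl⟩

theorem permMove_single {k : ℕ} (i j : Fin k) (x : ℕ) :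
    PermMove (Pi.single i x) (Pi.single j x) :=
  ⟨Equiv.swap j i, by rw [Pi.single_comp_equiv, Equiv.symm_swap, Equiv.swap_apply_right]⟩

theorem exists_reflTransGen_subtractMove_single {k : ℕ} (a : Fin k → ℕ)
    (hgcd : univ.gcd a = 1) : ∃ i, ReflTransGen SubtractMove a (Pi.single i 1) := by
  induction hn : ∑ i, a i using Nat.strong_induction_on generalizing a with
  | _ n ih =>
  by_cases hstep : ∃ r s, r ≠ s ∧ 0 < a s ∧ a s ≤ a r
  · obtain ⟨r, s, hrs, hs, hle⟩ := hstep
    have hlt : ∑ i, update a r (a r - a s) i < n :=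
      hn ▸ sum_update_lt_sum a (Nat.sub_lt (hs.trans_le hle) hs)
    obtain ⟨i, hi⟩ := ih _ hlt _ (by rwa [univ_gcd_update_sub a hrs hle]) rfl
    exact ⟨i, hi.head (subtractMove_update a hrs hle)⟩
  · push Not at hstep
    obtain ⟨i, hi⟩ : ∃ i, a i ≠ 0 := by
      by_contra! h
      simp [gcd_eq_zero_iff.2 fun i _ => h i] at hgcd
    have hzero : ∀ j ≠ i, a j = 0 := fun j hji => by
      by_contra hj
      have := hstep j i hji (Nat.pos_of_ne_zero hi)
      have := hstep i j hji.symm (Nat.pos_of_ne_zero hj)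
      omega
    have hai : a i = 1 := (univ_gcd_eq_of_forall_ne_eq_zero a hzero).symm.trans hgcd
    have ha : a = Pi.single i 1 := funext fun j => by
      rcases eq_or_ne j i with rfl | hj
      · simp [hai]
      · simp [hzero j hj, hj]
    exact ⟨i, ha ▸ .refl⟩

theorem reachable_unit_vector_of_gcd_eq_one_general (k : ℕ) (a : Fin k → ℕ)
    (hgcd : Finset.univ.gcd a = 1) :
    Relation.ReflTransGen (fun v v' => SubtractMove v v' ∨ PermMove v v') a
      (fun j => if (j : ℕ) = 0 then 1 else 0) := by
  obtain ⟨i, hi⟩ := exists_reflTransGen_subtractMove_single a hgcd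
  have : NeZero k := ⟨i.pos.ne'⟩
  have htarget : (fun j : Fin k => if (j : ℕ) = 0 then 1 else 0) = Pi.single 0 1 := by
    ext j
    simp only [Pi.single_apply, Fin.ext_iff, Fin.val_zero]
  rw [htarget]
  exact .tail (ReflTransGen.mono (fun _ _ => Or.inl) _ _ hi) (Or.inr (permMove_single i 0 1))

/-- Let `k ≥ 1` and let `a : Fin k → ℕ` be a vector of
nonnegative integers with `gcd (a₁,…,a_k) = 1`.  Then `a` can be transformed into
the vector `(1, 0, …, 0)` by a finite sequence of moves, each of which either
subtracts one entry from a (not smaller) other entry, or permutes the entries. -/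
theorem reachable_unit_vector_of_gcd_eq_one (k : ℕ) (hk : 1 ≤ k) (a : Fin k → ℕ)
    (hgcd : Finset.univ.gcd a = 1) :
    Relation.ReflTransGen (fun v v' => SubtractMove v v' ∨ PermMove v v') a
      (fun j => if (j : ℕ) = 0 then 1 else 0) :=
  reachable_unit_vector_of_gcd_eq_one_general k a hgcd
end
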